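/- arXiv:2208.01344 — 6 statements merged into one kernel-verified Lean document; each statement's English description precedes it below -/
import Mathlib

section
/- For sequences a, b : ℤ → ℝ of nonnegative reals with a_j + b_j > 0 for all j (so that D(a+b) is invertible), the commutation relation Φ(a,b)·Ψ = D(a+b)·Ψ·Φ(a,σ(b))·D(a+b)⁻¹ holds, where Φ(a,b) = D(a) + D(b)S, S is the shift matrix S_{ij} = [i = j+1], Ψ = Σ_{k≥0} S^k (entrywise convergent), D(a) is the diagonal matrix with entries a_j, and σ(b)_i = b_{i-1}. -/
namespace Stmt3

/-- Entrywise product of doubly infinite matrices. -/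
noncomputable def mul (A B : ℤ → ℤ → ℝ) : ℤ → ℤ → ℝ := fun i k => ∑' j, A i j * B j k

/-- The shift matrix `S`, with `S i j = 1` iff `i = j + 1`. -/
def S : ℤ → ℤ → ℝ := fun i j => if i = j + 1 then 1 else 0

/-- `Ψ = ∑_{k ≥ 0} S^k`, i.e. `Ψ i j = 1` for `j ≤ i`. -/
def Psi : ℤ → ℤ → ℝ := fun i j => if j ≤ i then 1 else 0

/-- Diagonal matrix with entries given by the sequence `a`. -/
def D (a : ℤ → ℝ) : ℤ → ℤ → ℝ := fun i j => if i = j then a i else 0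

/-- `Φ(a,b) = D(a) + D(b)·S`. -/
def Phi (a b : ℤ → ℝ) : ℤ → ℤ → ℝ :=
  fun i j => D a i j + b i * S i j

/-- The shift of a sequence: `(σ b) i = b (i-1)`. -/
def sigma (b : ℤ → ℝ) : ℤ → ℝ := fun i => b (i - 1)

lemma mul_D_right (A : ℤ → ℤ → ℝ) (c : ℤ → ℝ) (i k : ℤ) :
    mul A (D c) i k = A i k * c k := by
  unfold mul D
  rw [tsum_eq_single k]
  · simp
  · intro j hj
    simp [hj]

lemma mul_D_left (A : ℤ → ℤ → ℝ) (c : ℤ → ℝ) (i k : ℤ) :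
    mul (D c) A i k = c i * A i k := by
  unfold mul D
  rw [tsum_eq_single i]
  · simp
  · intro j hj
    simp [Ne.symm hj]

lemma mul_Phi_Psi (a b : ℤ → ℝ) (i k : ℤ) :
    mul (Phi a b) Psi i k = a i * Psi i k + b i * Psi (i - 1) k := by
  unfold mul
  rw [tsum_eq_sum (s := ({i - 1, i} : Finset ℤ))
    (by
      intro j hj
      simp only [Finset.mem_insert, Finset.mem_singleton, not_or] at hj
      have h1 : i ≠ j := fun h => hj.2 h.symm
      have h2 : i ≠ j + 1 := by omega
      simp [Phi, D, S, h1, h2])]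
  have hne : (i - 1 : ℤ) ≠ i := by omega
  rw [Finset.sum_pair hne]
  have e1 : i = (i - 1) + 1 := by omega
  simp [Phi, D, S, hne.symm, ← e1]
  ring

lemma mul_Psi (A : ℤ → ℤ → ℝ) (i k : ℤ)
    (hA : ∀ j, j ≠ k → j ≠ k + 1 → A j k = 0) :
    mul Psi A i k = Psi i k * A k k + Psi i (k + 1) * A (k + 1) k := by
  unfold mul
  rw [tsum_eq_sum (s := ({k, k + 1} : Finset ℤ))
    (by
      intro j hj
      simp only [Finset.mem_insert, Finset.mem_singleton, not_or] at hj
      rw [hA j hj.1 hj.2, mul_zero])]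
  have hne : (k : ℤ) ≠ k + 1 := by omega
  rw [Finset.sum_pair hne]

/-- The commutation relation
`Φ(a,b)·Ψ = D(a+b)·Ψ·Φ(a,σ(b))·D(a+b)⁻¹` for nonnegative sequences `a, b`
with `a j + b j > 0` for all `j`. -/
theorem commutation_relation (a b : ℤ → ℝ)
    (ha : ∀ j, 0 ≤ a j) (hb : ∀ j, 0 ≤ b j) (hab : ∀ j, 0 < a j + b j) :
    mul (Phi a b) Psi =
      mul (D (fun j => a j + b j))
        (mul Psi (mul (Phi a (sigma b)) (D (fun j => (a j + b j)⁻¹)))) := by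
  funext i k
  rw [mul_Phi_Psi, mul_D_left, mul_Psi]
  · rw [mul_D_right, mul_D_right]
    have hk : Phi a (sigma b) k k = a k := by simp [Phi, D, S, sigma]
    have hk1 : Phi a (sigma b) (k + 1) k = b k := by
      simp [Phi, D, S, sigma]
    rw [hk, hk1]
    have hne : a k + b k ≠ 0 := ne_of_gt (hab k)
    unfold Psi
    rcases lt_trichotomy k i with h | h | h
    · have h1 : k ≤ i := le_of_lt h
      have h2 : k ≤ i - 1 := by omega
      have h3 : k + 1 ≤ i := by omega
      simp only [if_pos h1, if_pos h2, if_pos h3]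
      field_simp
    · subst h
      have h2 : ¬ (k ≤ k - 1) := by omega
      have h3 : ¬ (k + 1 ≤ k) := by omega
      simp only [le_refl, if_true, if_neg h2, if_neg h3]
      field_simp
    · have h1 : ¬ (k ≤ i) := not_le.mpr h
      have h2 : ¬ (k ≤ i - 1) := by omega
      have h3 : ¬ (k + 1 ≤ i) := by omega
      simp [h1, h2, h3]
  · intro j hj hj1
    rw [mul_D_right]
    have : Phi a (sigma b) j k = 0 := by
      have h1 : j ≠ k := hj
      have h2 : j ≠ k + 1 := hj1
      simp [Phi, D, S, h1, h2]
    rw [this, zero_mul]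

end Stmt3
end

section
/- Define the even-face-weight update under the forward dynamics: given positive parameters a_{i,j}, b_{i,j} and the maps â_{i,j} = a_{i,j}·(a_{i+1,j}+b_{i+1,j})/(a_{i,j}+b_{i,j}) and b̂_{i,j} = b_{i,j-1}·(a_{i+1,j-1}+b_{i+1,j-1})/(a_{i,j-1}+b_{i,j-1}). Then the new even face weight F̂_{2i,j} = â_{i,j}/b̂_{i,j} satisfies F̂_{2i,j} = F_{2i+1,j-1}·(1+F_{2i+2,j})/(1+1/F_{2i+2,j-1})·(1+F_{2i,j-1})/(1+1/F_{2i,j}), where F_{2i,j} = a_{i,j}/b_{i,j} and F_{2i+1,j} = b_{i+1,j+1}/a_{i+1,j}. -/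
/-- Forward dynamics: the new even face weight `F̂_{2i,j} = â_{i,j}/b̂_{i,j}` equals
`F_{2i+1,j-1}·(1+F_{2i+2,j})/(1+1/F_{2i+2,j-1})·(1+F_{2i,j-1})/(1+1/F_{2i,j})`,
where `F_{2i,j} = a_{i,j}/b_{i,j}` and `F_{2i+1,j} = b_{i+1,j+1}/a_{i+1,j}`. -/
theorem forward_even_face_weight
    (a b : ℤ → ℤ → ℝ) (ha : ∀ i j, 0 < a i j) (hb : ∀ i j, 0 < b i j) (i j : ℤ) :
    (a i j * (a (i+1) j + b (i+1) j) / (a i j + b i j)) /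
      (b i (j-1) * (a (i+1) (j-1) + b (i+1) (j-1)) / (a i (j-1) + b i (j-1)))
    = (b (i+1) ((j-1)+1) / a (i+1) (j-1)) *
        ((1 + a (i+1) j / b (i+1) j) / (1 + (a (i+1) (j-1) / b (i+1) (j-1))⁻¹)) *
        ((1 + a i (j-1) / b i (j-1)) / (1 + (a i j / b i j)⁻¹)) := by
  have h1 : (j-1)+1 = j := by ring
  rw [h1]
  have n1 := (ha i j).ne'
  have n2 := (hb i j).ne'
  have n3 := (ha i (j-1)).ne'
  have n4 := (hb i (j-1)).ne'
  have n5 := (ha (i+1) j).ne'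
  have n6 := (hb (i+1) j).ne'
  have n7 := (ha (i+1) (j-1)).ne'
  have n8 := (hb (i+1) (j-1)).ne'
  have s1 : a i j + b i j ≠ 0 := (add_pos (ha i j) (hb i j)).ne'
  have s2 : a i (j-1) + b i (j-1) ≠ 0 := (add_pos (ha i (j-1)) (hb i (j-1))).ne'
  have s3 : a (i+1) j + b (i+1) j ≠ 0 := (add_pos (ha (i+1) j) (hb (i+1) j)).ne'
  have s4 : a (i+1) (j-1) + b (i+1) (j-1) ≠ 0 := (add_pos (ha (i+1) (j-1)) (hb (i+1) (j-1))).ne'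
  field_simp
  ring
end

section
/- Under the reverse dynamics, the new odd face weight satisfies F̌_{2i+1,j} = b̌_{i,j+1}/ǎ_{i+1,j} = F_{2i,j+1}·(1+F_{2i-1,j+1})/(1+1/F_{2i+1,j+1})·(1+F_{2i+1,j})/(1+1/F_{2i-1,j}), where F_{2i,j}=a_{i,j}/b_{i,j}, F_{2i+1,j}=b_{i+1,j+1}/a_{i+1,j}, ǎ_{i,j} = a_{i,j}(a_{i-1,j}+b_{i-1,j+1})/(a_{i,j}+b_{i,j+1}), b̌_{i,j} = b_{i,j+1}(a_{i-1,j}+b_{i-1,j+1})/(a_{i,j}+b_{i,j+1}). -/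
namespace Stmt8

/-- Even face weight `F_{2i,j} = a_{i,j}/b_{i,j}`. -/
noncomputable def Fe (a b : ℤ → ℤ → ℝ) (i j : ℤ) : ℝ := a i j / b i j

/-- Odd face weight `F_{2i+1,j} = b_{i+1,j+1}/a_{i+1,j}` (here indexed so that
`Fo a b i j = F_{2i+1,j}`; in particular `F_{2i-1,j} = Fo a b (i-1) j = b_{i,j+1}/a_{i,j}`). -/
noncomputable def Fo (a b : ℤ → ℤ → ℝ) (i j : ℤ) : ℝ := b (i+1) (j+1) / a (i+1) j

/-- Reverse-dynamics parameter `ǎ_{i,j}`. -/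
noncomputable def ac (a b : ℤ → ℤ → ℝ) (i j : ℤ) : ℝ :=
  a i j * (a (i-1) j + b (i-1) (j+1)) / (a i j + b i (j+1))

/-- Reverse-dynamics parameter `b̌_{i,j}`. -/
noncomputable def bc (a b : ℤ → ℤ → ℝ) (i j : ℤ) : ℝ :=
  b i (j+1) * (a (i-1) j + b (i-1) (j+1)) / (a i j + b i (j+1))

lemma key (A1 B1 A2 B2 A3 B3 A4 B4 : ℝ)
    (hA1 : 0 < A1) (hB1 : 0 < B1) (hA2 : 0 < A2) (hB2 : 0 < B2)
    (hA3 : 0 < A3) (hB3 : 0 < B3) (hA4 : 0 < A4) (hB4 : 0 < B4) :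
    B4 * (A2 + B2) / (A4 + B4) / (A3 * (A1 + B1) / (A3 + B3))
      = A2 / B1 * ((1 + B2 / A2) / (1 + (B4 / A4)⁻¹)) * ((1 + B3 / A3) / (1 + (B1 / A1)⁻¹)) := by
  have h1 : A4 + B4 ≠ 0 := by positivity
  have h2 : A1 + B1 ≠ 0 := by positivity
  have h3 : 1 + (B4 / A4)⁻¹ ≠ 0 := by positivity
  have h4 : 1 + (B1 / A1)⁻¹ ≠ 0 := by positivity
  field_simp
  ring

/-- Reverse dynamics: the new odd face weight satisfies
`F̌_{2i+1,j} = F_{2i,j+1}·(1+F_{2i-1,j+1})/(1+1/F_{2i+1,j+1})·(1+F_{2i+1,j})/(1+1/F_{2i-1,j})`. -/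
theorem reverse_odd_face_weight
    (a b : ℤ → ℤ → ℝ) (ha : ∀ i j, 0 < a i j) (hb : ∀ i j, 0 < b i j) (i j : ℤ) :
    bc a b (i+1) (j+1) / ac a b (i+1) j
      = Fe a b i (j+1) * ((1 + Fo a b (i-1) (j+1)) / (1 + (Fo a b i (j+1))⁻¹)) *
          ((1 + Fo a b i j) / (1 + (Fo a b (i-1) j)⁻¹)) := by
  have h1 : (i:ℤ)+1-1 = i := by ring
  have h2 : (i:ℤ)-1+1 = i := by ring
  simp only [Fe, Fo, ac, bc, h1, h2]
  exact key _ _ _ _ _ _ _ _ (ha _ _) (hb _ _) (ha _ _) (hb _ _) (ha _ _) (hb _ _) (ha _ _) (hb _ _)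
end Stmt8
end

section
/- If G (a doubly infinite matrix) admits both a factorization G = L⁽¹⁾U⁽¹⁾ with L⁽¹⁾ lower and U⁽¹⁾ upper triangular, and G = U⁽²⁾L⁽²⁾ with U⁽²⁾ upper and L⁽²⁾ lower triangular, and all four factors are invertible with Λ⁽ʲ⁾ = (L⁽ʲ⁾)⁻¹ lower triangular and Υ⁽ʲ⁾ = (U⁽ʲ⁾)⁻¹ upper triangular, then writing all matrices in 3×3 block form relative to a finite middle block of indices, the identity G₂₂·((G⁻¹)₂₂ − Υ⁽¹⁾₂₃Λ⁽¹⁾₃₂ − Λ⁽²⁾₂₁Υ⁽²⁾₁₂) = I₂ + L⁽¹⁾₂₁U⁽¹⁾₁₁Υ⁽¹⁾₁₃Λ⁽¹⁾₃₂ + U⁽²⁾₂₃L⁽²⁾₃₃Λ⁽²⁾₃₁Υ⁽²⁾₁₂ holds. -/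
namespace Stmt12

open Matrix

variable {n : ℕ}

/-- A square matrix is lower triangular. -/
def IsLower (A : Matrix (Fin n) (Fin n) ℝ) : Prop := ∀ i j : Fin n, (i : ℕ) < j → A i j = 0

/-- A square matrix is upper triangular. -/
def IsUpper (A : Matrix (Fin n) (Fin n) ℝ) : Prop := ∀ i j : Fin n, (j : ℕ) < i → A i j = 0

/-- Projection onto the first block of indices, `i < k₁`. -/
def P1 (n k₁ : ℕ) : Matrix (Fin n) (Fin n) ℝ :=
  Matrix.diagonal (fun i => if (i : ℕ) < k₁ then 1 else 0)

/-- Projection onto the middle block of indices, `k₁ ≤ i < k₂`. -/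
def P2 (n k₁ k₂ : ℕ) : Matrix (Fin n) (Fin n) ℝ :=
  Matrix.diagonal (fun i => if k₁ ≤ (i : ℕ) ∧ (i : ℕ) < k₂ then 1 else 0)

/-- Projection onto the last block of indices, `k₂ ≤ i`. -/
def P3 (n k₂ : ℕ) : Matrix (Fin n) (Fin n) ℝ :=
  Matrix.diagonal (fun i => if k₂ ≤ (i : ℕ) then 1 else 0)

section ringlemmas
variable {R : Type*} [Ring R]
lemma mulX {a b c : R} (h : a * b = c) (X : R) : a * (b * X) = c * X := by
  rw [← mul_assoc, h]
lemma oneX {a b : R} (h : a * b = 1) (X : R) : a * (b * X) = X := by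
  rw [← mul_assoc, h, one_mul]
lemma zeroX3 {a b c : R} (h : a * b * c = 0) (X : R) : a * (b * (c * X)) = 0 := by
  rw [← mul_assoc, ← mul_assoc, h, zero_mul]
lemma split3b {p q r : R} (h : p + q + r = 1) (a b X : R) :
    a * (b * X) = a * (b * (p * X)) + a * (b * (q * X)) + a * (b * (r * X)) := by
  have h2 : a * (b * (p * X)) + a * (b * (q * X)) + a * (b * (r * X))
      = a * (b * ((p + q + r) * X)) := by noncomm_ring
  rw [h2, h, one_mul]
lemma split3q {p q r : R} (h : p + q + r = 1) (a b X : R) :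
    a * (b * (q * X)) = a * (b * X) - a * (b * (p * X)) - a * (b * (r * X)) := by
  rw [split3b h a b X]; abel
end ringlemmas

lemma sand {n : ℕ} (d e : Fin n → ℝ) (A : Matrix (Fin n) (Fin n) ℝ)
    (h : ∀ i j, d i = 0 ∨ e j = 0 ∨ A i j = 0) :
    Matrix.diagonal d * A * Matrix.diagonal e = 0 := by
  ext i j
  rw [Matrix.mul_diagonal, Matrix.diagonal_mul]
  rcases h i j with h | h | h <;> simp [h]


/-- If `G = L⁽¹⁾U⁽¹⁾ = U⁽²⁾L⁽²⁾` with triangular, invertible factors whose inverses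
`Λ⁽ʲ⁾, Υ⁽ʲ⁾` are triangular of the same type, then in 3×3 block form (blocks cut out
by the projections `P₁, P₂, P₃`)
`G₂₂·((G⁻¹)₂₂ − Υ⁽¹⁾₂₃Λ⁽¹⁾₃₂ − Λ⁽²⁾₂₁Υ⁽²⁾₁₂)
  = I₂ + L⁽¹⁾₂₁U⁽¹⁾₁₁Υ⁽¹⁾₁₃Λ⁽¹⁾₃₂ + U⁽²⁾₂₃L⁽²⁾₃₃Λ⁽²⁾₃₁Υ⁽²⁾₁₂`. -/
theorem approximate_inverse_identity
    (k₁ k₂ : ℕ) (hk₁ : k₁ ≤ k₂) (hk₂ : k₂ ≤ n)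
    (G Ginv L1 U1 L2 U2 Λ1 Υ1 Λ2 Υ2 : Matrix (Fin n) (Fin n) ℝ)
    (hL1 : IsLower L1) (hU1 : IsUpper U1) (hL2 : IsLower L2) (hU2 : IsUpper U2)
    (hΛ1 : IsLower Λ1) (hΥ1 : IsUpper Υ1) (hΛ2 : IsLower Λ2) (hΥ2 : IsUpper Υ2)
    (hLU : G = L1 * U1) (hUL : G = U2 * L2)
    (hL1inv : L1 * Λ1 = 1) (hL1inv' : Λ1 * L1 = 1)
    (hU1inv : U1 * Υ1 = 1) (hU1inv' : Υ1 * U1 = 1)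
    (hL2inv : L2 * Λ2 = 1) (hL2inv' : Λ2 * L2 = 1)
    (hU2inv : U2 * Υ2 = 1) (hU2inv' : Υ2 * U2 = 1)
    (hGinv : G * Ginv = 1) (hGinv' : Ginv * G = 1) :
    P2 n k₁ k₂ * G * P2 n k₁ k₂ *
        (P2 n k₁ k₂ * Ginv * P2 n k₁ k₂
          - P2 n k₁ k₂ * Υ1 * P3 n k₂ * Λ1 * P2 n k₁ k₂
          - P2 n k₁ k₂ * Λ2 * P1 n k₁ * Υ2 * P2 n k₁ k₂)
      = P2 n k₁ k₂
          + P2 n k₁ k₂ * L1 * P1 n k₁ * U1 * P1 n k₁ * Υ1 * P3 n k₂ * Λ1 * P2 n k₁ k₂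
          + P2 n k₁ k₂ * U2 * P3 n k₂ * L2 * P3 n k₂ * Λ2 * P1 n k₁ * Υ2 * P2 n k₁ k₂ := by
  -- zero-block lemmas
  have z1 : P2 n k₁ k₂ * L1 * P3 n k₂ = 0 := by
    refine sand _ _ _ fun i j => ?_
    by_cases h1 : k₁ ≤ (i : ℕ) ∧ (i : ℕ) < k₂
    · by_cases h2 : k₂ ≤ (j : ℕ)
      · exact Or.inr (Or.inr (hL1 i j (by omega)))
      · exact Or.inr (Or.inl (by simp [h2]))
    · exact Or.inl (by simp [h1])
  have z2 : P2 n k₁ k₂ * U1 * P1 n k₁ = 0 := by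
    refine sand _ _ _ fun i j => ?_
    by_cases h1 : k₁ ≤ (i : ℕ) ∧ (i : ℕ) < k₂
    · by_cases h2 : (j : ℕ) < k₁
      · exact Or.inr (Or.inr (hU1 i j (by omega)))
      · exact Or.inr (Or.inl (by simp [h2]))
    · exact Or.inl (by simp [h1])
  have z3 : P3 n k₂ * U1 * P1 n k₁ = 0 := by
    refine sand _ _ _ fun i j => ?_
    by_cases h1 : k₂ ≤ (i : ℕ)
    · by_cases h2 : (j : ℕ) < k₁
      · exact Or.inr (Or.inr (hU1 i j (by omega)))
      · exact Or.inr (Or.inl (by simp [h2]))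
    · exact Or.inl (by simp [h1])
  have z4 : P3 n k₂ * Υ1 * P1 n k₁ = 0 := by
    refine sand _ _ _ fun i j => ?_
    by_cases h1 : k₂ ≤ (i : ℕ)
    · by_cases h2 : (j : ℕ) < k₁
      · exact Or.inr (Or.inr (hΥ1 i j (by omega)))
      · exact Or.inr (Or.inl (by simp [h2]))
    · exact Or.inl (by simp [h1])
  have z5 : P3 n k₂ * Υ1 * P2 n k₁ k₂ = 0 := by
    refine sand _ _ _ fun i j => ?_
    by_cases h1 : k₂ ≤ (i : ℕ)
    · by_cases h2 : k₁ ≤ (j : ℕ) ∧ (j : ℕ) < k₂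
      · exact Or.inr (Or.inr (hΥ1 i j (by omega)))
      · exact Or.inr (Or.inl (by simp [h2]))
    · exact Or.inl (by simp [h1])
  have z6 : P2 n k₁ k₂ * U2 * P1 n k₁ = 0 := by
    refine sand _ _ _ fun i j => ?_
    by_cases h1 : k₁ ≤ (i : ℕ) ∧ (i : ℕ) < k₂
    · by_cases h2 : (j : ℕ) < k₁
      · exact Or.inr (Or.inr (hU2 i j (by omega)))
      · exact Or.inr (Or.inl (by simp [h2]))
    · exact Or.inl (by simp [h1])
  have z7 : P1 n k₁ * Λ2 * P2 n k₁ k₂ = 0 := by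
    refine sand _ _ _ fun i j => ?_
    by_cases h1 : (i : ℕ) < k₁
    · by_cases h2 : k₁ ≤ (j : ℕ) ∧ (j : ℕ) < k₂
      · exact Or.inr (Or.inr (hΛ2 i j (by omega)))
      · exact Or.inr (Or.inl (by simp [h2]))
    · exact Or.inl (by simp [h1])
  have z8 : P1 n k₁ * Λ2 * P3 n k₂ = 0 := by
    refine sand _ _ _ fun i j => ?_
    by_cases h1 : (i : ℕ) < k₁
    · by_cases h2 : k₂ ≤ (j : ℕ)
      · exact Or.inr (Or.inr (hΛ2 i j (by omega)))
      · exact Or.inr (Or.inl (by simp [h2]))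
    · exact Or.inl (by simp [h1])
  have z9 : P1 n k₁ * L2 * P3 n k₂ = 0 := by
    refine sand _ _ _ fun i j => ?_
    by_cases h1 : (i : ℕ) < k₁
    · by_cases h2 : k₂ ≤ (j : ℕ)
      · exact Or.inr (Or.inr (hL2 i j (by omega)))
      · exact Or.inr (Or.inl (by simp [h2]))
    · exact Or.inl (by simp [h1])
  have z10 : P2 n k₁ k₂ * L2 * P3 n k₂ = 0 := by
    refine sand _ _ _ fun i j => ?_
    by_cases h1 : k₁ ≤ (i : ℕ) ∧ (i : ℕ) < k₂
    · by_cases h2 : k₂ ≤ (j : ℕ)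
      · exact Or.inr (Or.inr (hL2 i j (by omega)))
      · exact Or.inr (Or.inl (by simp [h2]))
    · exact Or.inl (by simp [h1])
  -- projection algebra
  have hsum : P1 n k₁ + P2 n k₁ k₂ + P3 n k₂ = 1 := by
    ext i j
    rcases eq_or_ne i j with rfl | hne
    · simp only [P1, P2, P3, Matrix.add_apply, Matrix.diagonal_apply_eq, Matrix.one_apply_eq]
      split_ifs <;> first | (exfalso; omega) | norm_num
    · simp [P1, P2, P3, Matrix.add_apply, Matrix.diagonal_apply_ne _ hne,
        Matrix.one_apply_ne hne]
  have hsum' : P1 n k₁ + P3 n k₂ + P2 n k₁ k₂ = 1 := by rw [← hsum]; abel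
  have hsum'' : P2 n k₁ k₂ + P1 n k₁ + P3 n k₂ = 1 := by rw [← hsum]; abel
  have hQ2sq : P2 n k₁ k₂ * P2 n k₁ k₂ = P2 n k₁ k₂ := by
    rw [P2, Matrix.diagonal_mul_diagonal]
    refine congrArg Matrix.diagonal (funext fun i => ?_)
    by_cases h1 : k₁ ≤ (i : ℕ) ∧ (i : ℕ) < k₂ <;> simp [h1]
  -- inverse identities
  have hΥ1Λ1 : Υ1 * Λ1 = Ginv := by
    have h1 : G * (Υ1 * Λ1) = 1 := by
      rw [hLU, mul_assoc, ← mul_assoc U1, hU1inv, one_mul, hL1inv]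
    calc Υ1 * Λ1 = Ginv * (G * (Υ1 * Λ1)) := by rw [← mul_assoc, hGinv', one_mul]
      _ = Ginv := by rw [h1, mul_one]
  have hΛ2Υ2 : Λ2 * Υ2 = Ginv := by
    have h1 : G * (Λ2 * Υ2) = 1 := by
      rw [hUL, mul_assoc, ← mul_assoc L2, hL2inv, one_mul, hU2inv]
    calc Λ2 * Υ2 = Ginv * (G * (Λ2 * Υ2)) := by rw [← mul_assoc, hGinv', one_mul]
      _ = Ginv := by rw [h1, mul_one]
  -- structural rewrite rules
  have hGΥ1X : ∀ X, P2 n k₁ k₂ * (G * (Υ1 * X)) = P2 n k₁ k₂ * (L1 * X) := by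
    intro X
    rw [hLU, mul_assoc L1, oneX hU1inv]
  have hGΛ2X : ∀ X, P2 n k₁ k₂ * (G * (Λ2 * X)) = P2 n k₁ k₂ * (U2 * X) := by
    intro X
    rw [hUL, mul_assoc U2, oneX hL2inv]
  have hGQ1X : ∀ X, P2 n k₁ k₂ * (G * (P1 n k₁ * X))
      = P2 n k₁ k₂ * (L1 * (P1 n k₁ * (U1 * (P1 n k₁ * X)))) := by
    intro X
    rw [hLU, mul_assoc L1, split3b hsum (P2 n k₁ k₂) L1 (U1 * (P1 n k₁ * X))]
    simp only [zeroX3 z2, zeroX3 z3, mul_zero, add_zero]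
  have hGQ3X : ∀ X, P2 n k₁ k₂ * (G * (P3 n k₂ * X))
      = P2 n k₁ k₂ * (U2 * (P3 n k₂ * (L2 * (P3 n k₂ * X)))) := by
    intro X
    rw [hUL, mul_assoc U2, split3b hsum (P2 n k₁ k₂) U2 (L2 * (P3 n k₂ * X))]
    simp only [zeroX3 z9, zeroX3 z10, mul_zero, add_zero, zero_add]
  have hΥ1Q3mid : ∀ Y, P3 n k₂ * (Υ1 * (P3 n k₂ * Y)) = P3 n k₂ * (Υ1 * Y) := by
    intro Y
    rw [split3q hsum' (P3 n k₂) Υ1 Y]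
    simp only [zeroX3 z4, zeroX3 z5, sub_zero]
  have hΛ2Q1mid : ∀ Y, P1 n k₁ * (Λ2 * (P1 n k₁ * Y)) = P1 n k₁ * (Λ2 * Y) := by
    intro Y
    rw [split3q hsum'' (P1 n k₁) Λ2 Y]
    simp only [zeroX3 z7, zeroX3 z8, sub_zero]
  -- main computation
  simp only [mul_sub, mul_assoc]
  simp only [mulX hQ2sq]
  rw [split3q hsum (P2 n k₁ k₂) G (Ginv * P2 n k₁ k₂),
      split3q hsum (P2 n k₁ k₂) G (Υ1 * (P3 n k₂ * (Λ1 * P2 n k₁ k₂))),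
      split3q hsum (P2 n k₁ k₂) G (Λ2 * (P1 n k₁ * (Υ2 * P2 n k₁ k₂)))]
  rw [oneX hGinv (P2 n k₁ k₂), hQ2sq]
  rw [hΥ1Q3mid (Λ1 * P2 n k₁ k₂), mulX hΥ1Λ1 (P2 n k₁ k₂)]
  rw [hΛ2Q1mid (Υ2 * P2 n k₁ k₂), mulX hΛ2Υ2 (P2 n k₁ k₂)]
  rw [hGΥ1X (P3 n k₂ * (Λ1 * P2 n k₁ k₂)), zeroX3 z1]
  rw [hGΛ2X (P1 n k₁ * (Υ2 * P2 n k₁ k₂)), zeroX3 z6]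
  simp only [hGQ1X, hGQ3X]
  abel


end Stmt12
end

section
/- Decay bound for the inverse of a banded bidiagonal operator: let a, b : ℤ → ℝ with b_j > 0 for all j, and suppose there exist R > 0, 0 < ρ < 1, δ₁, δ₂ > 0 with sup_j Π_{ℓ=0}^{k-1} (a_{j+ℓ}/b_{j+ℓ}) ≤ R ρ^k for all k ≥ 1 and δ₁ ≤ a_j + b_j ≤ δ₂, δ₁ ≤ b_j. Then the doubly infinite matrix D(a)S⁻¹ + D(b) has a two-sided inverse T given by T = (Σ_{k=0}^∞ (−1)^k D(Π_{ℓ=0}^{k-1} σ^{−ℓ}(a/b)) S^{−k}) D(b)⁻¹, and its entries satisfy |T_{ij}| ≤ R' ρ^{|i−j|} for some constant R' > 0. -/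
namespace Stmt14

/-- Entrywise product of doubly infinite matrices. -/
noncomputable def mul (A B : ℤ → ℤ → ℝ) : ℤ → ℤ → ℝ := fun i k => ∑' j, A i j * B j k

/-- The doubly infinite identity matrix. -/
def Id : ℤ → ℤ → ℝ := fun i j => if i = j then 1 else 0

/-- The matrix `D(a)S⁻¹ + D(b)`: entry `(i,j)` is `a i` if `j = i+1`, `b i` if `j = i`. -/
def M (a b : ℤ → ℝ) : ℤ → ℤ → ℝ :=
  fun i j => a i * (if j = i + 1 then 1 else 0) + b i * (if j = i then 1 else 0)

/-- The candidate inverse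
`T = (∑_{k≥0} (−1)^k D(∏_{ℓ<k} σ^{−ℓ}(a/b)) S^{−k}) D(b)⁻¹`, written entrywise. -/
noncomputable def T (a b : ℤ → ℝ) : ℤ → ℤ → ℝ :=
  fun i j =>
    (∑' k : ℕ, (-1 : ℝ) ^ k * (∏ ℓ ∈ Finset.range k, a (i + ℓ) / b (i + ℓ)) *
        (if j = i + k then 1 else 0)) * (b j)⁻¹

lemma Tval (a b : ℤ → ℝ) (i j : ℤ) :
    T a b i j = if i ≤ j then
      ((-1:ℝ) ^ (j - i).toNat * ∏ ℓ ∈ Finset.range (j-i).toNat, a (i + ℓ) / b (i + ℓ))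
        * (b j)⁻¹
    else 0 := by
  simp only [T]
  by_cases h : i ≤ j
  · rw [if_pos h]
    have h1 : (∑' k : ℕ, (-1:ℝ)^k * (∏ ℓ ∈ Finset.range k, a (i+ℓ)/b (i+ℓ)) *
        (if j = i + k then 1 else 0))
        = (-1:ℝ)^((j-i).toNat) * (∏ ℓ ∈ Finset.range (j-i).toNat, a (i+ℓ)/b (i+ℓ)) := by
      rw [tsum_eq_single ((j-i).toNat) (fun k hk => by rw [if_neg (by omega)]; ring)]
      rw [if_pos (by omega)]; ring
    rw [h1]
  · rw [if_neg h]
    have h1 : ∀ k : ℕ, (-1:ℝ)^k * (∏ ℓ ∈ Finset.range k, a (i+ℓ)/b (i+ℓ)) *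
        (if j = i + k then 1 else 0) = 0 := by
      intro k; rw [if_neg (by omega)]; ring
    simp only [h1, tsum_zero, zero_mul]

lemma prod_shift (a b : ℤ → ℝ) (i : ℤ) (n : ℕ) :
    ∏ ℓ ∈ Finset.range (n+1), a (i + ℓ) / b (i + ℓ)
      = (a i / b i) * ∏ ℓ ∈ Finset.range n, a ((i+1) + ℓ) / b ((i+1) + ℓ) := by
  rw [Finset.prod_range_succ']
  have h : ∀ x ∈ Finset.range n, a (i + ↑(x+1)) / b (i + ↑(x+1))
      = a ((i+1) + x) / b ((i+1) + x) := by
    intro x _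
    have : (i:ℤ) + ↑(x+1) = (i+1) + x := by push_cast; ring
    rw [this]
  rw [Finset.prod_congr rfl h]
  simp only [Nat.cast_zero, add_zero]
  ring

lemma abs_prod_le (a b : ℤ → ℝ) (hb : ∀ j, 0 < b j)
    (R ρ δ₁ : ℝ) (hρ0 : 0 < ρ) (hρ1 : ρ < 1) (hδ1 : 0 < δ₁)
    (hdecay : ∀ j : ℤ, ∀ k : ℕ, 1 ≤ k →
      ∏ ℓ ∈ Finset.range k, a (j + ℓ) / b (j + ℓ) ≤ R * ρ ^ k)
    (hsum : ∀ j : ℤ, δ₁ ≤ a j + b j) :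
    ∀ (j : ℤ) (k : ℕ), |∏ ℓ ∈ Finset.range k, a (j + ℓ) / b (j + ℓ)| ≤
      (max 1 R)^2 / ρ * ρ ^ k := by
  have hM1 : (1:ℝ) ≤ max 1 R := le_max_left _ _
  have hMR : R ≤ max 1 R := le_max_right _ _
  have hM0 : (0:ℝ) < max 1 R := lt_of_lt_of_le one_pos hM1
  have hub : ∀ (j : ℤ) (m : ℕ), ∏ ℓ ∈ Finset.range m, a (j+ℓ)/b (j+ℓ) ≤ max 1 R * ρ ^ m := by
    intro j m
    rcases Nat.eq_zero_or_pos m with h | h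
    · subst h; simpa using hM1
    · exact (hdecay j m h).trans (mul_le_mul_of_nonneg_right hMR (pow_nonneg hρ0.le m))
  have hC : max 1 R ≤ (max 1 R)^2 / ρ := by
    rw [le_div_iff₀ hρ0]; nlinarith
  intro j k
  classical
  by_cases hP : 0 ≤ ∏ ℓ ∈ Finset.range k, a (j + ℓ) / b (j + ℓ)
  · rw [abs_of_nonneg hP]
    exact (hub j k).trans (mul_le_mul_of_nonneg_right hC (pow_nonneg hρ0.le k))
  · push_neg at hP
    set s := (Finset.range k).filter (fun ℓ : ℕ => a (j+ℓ)/b (j+ℓ) < 0) with hsdef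
    have hs : s.Nonempty := by
      by_contra hns
      refine absurd (Finset.prod_nonneg (fun ℓ hℓ => ?_)) (not_le.mpr hP)
      by_contra hneg; push_neg at hneg
      exact hns ⟨ℓ, Finset.mem_filter.mpr ⟨hℓ, hneg⟩⟩
    set m := s.max' hs with hmdef
    have hm : m ∈ s := s.max'_mem hs
    obtain ⟨hmk, hmneg⟩ := Finset.mem_filter.mp hm
    have hmk' : m < k := Finset.mem_range.mp hmk
    have htail_nonneg : ∀ ℓ : ℕ, m < ℓ → ℓ < k → 0 ≤ a (j+ℓ)/b (j+ℓ) := by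
      intro ℓ h1 h2
      by_contra h; push_neg at h
      have hmem : ℓ ∈ s := Finset.mem_filter.mpr ⟨Finset.mem_range.mpr h2, h⟩
      have := s.le_max' ℓ hmem; omega
    set t := k - (m+1) with htdef
    have hk : k = (m+1) + t := by omega
    have hdec : ∏ ℓ ∈ Finset.range k, a (j+ℓ)/b (j+ℓ)
        = ((∏ ℓ ∈ Finset.range m, a (j+ℓ)/b (j+ℓ)) * (a (j+m)/b (j+m)))
          * ∏ ℓ ∈ Finset.range t, a ((j+m+1)+ℓ)/b ((j+m+1)+ℓ) := by
      rw [hk, Finset.prod_range_add, Finset.prod_range_succ]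
      congr 1
      refine Finset.prod_congr rfl (fun x _ => ?_)
      have h : (j : ℤ) + ↑(m + 1 + x) = (j + m + 1) + x := by push_cast; ring
      rw [h]
    set P1 := ∏ ℓ ∈ Finset.range m, a (j+ℓ)/b (j+ℓ) with hP1def
    set Tl := ∏ ℓ ∈ Finset.range t, a ((j+m+1)+ℓ)/b ((j+m+1)+ℓ) with hTldef
    have hTl0 : 0 ≤ Tl := by
      refine Finset.prod_nonneg (fun x hx => ?_)
      have harg : (j + (m:ℤ) + 1) + (x:ℤ) = j + ↑(m+1+x) := by push_cast; ring
      rw [harg]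
      exact htail_nonneg (m+1+x) (by omega) (by have := Finset.mem_range.mp hx; omega)
    have hfm1 : -1 ≤ a (j+m)/b (j+m) := by
      have hb' := hb (j+(m:ℤ)); have hs' := hsum (j+(m:ℤ))
      rw [le_div_iff₀ hb']; nlinarith
    have hP1pos : 0 < P1 := by
      by_contra h; push_neg at h
      have h0 : 0 ≤ ∏ ℓ ∈ Finset.range k, a (j+ℓ)/b (j+ℓ) := by
        rw [hdec]
        have h1 : 0 ≤ P1 * (a (j+(m:ℤ))/b (j+(m:ℤ))) :=
          mul_nonneg_of_nonpos_of_nonpos h hmneg.le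
        exact mul_nonneg h1 hTl0
      linarith
    have hP1le : P1 ≤ max 1 R * ρ ^ m := hub j m
    have hTlle : Tl ≤ max 1 R * ρ ^ t := by
      rcases Nat.eq_zero_or_pos t with h | h
      · rw [hTldef, h]; simpa using hM1
      · exact (hdecay (j+m+1) t h).trans
          (mul_le_mul_of_nonneg_right hMR (pow_nonneg hρ0.le t))
    rw [abs_of_neg hP, hdec]
    have key : -((P1 * (a (j+m)/b (j+m))) * Tl) ≤ P1 * Tl := by
      nlinarith [mul_nonneg (mul_nonneg hP1pos.le hTl0)
        (by linarith : (0:ℝ) ≤ 1 + a (j+(m:ℤ))/b (j+(m:ℤ)))]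
    have h2 : P1 * Tl ≤ (max 1 R * ρ^m) * (max 1 R * ρ^t) :=
      mul_le_mul hP1le hTlle hTl0 (by positivity)
    have h3 : (max 1 R * ρ^m) * (max 1 R * ρ^t) = (max 1 R)^2/ρ * ρ^k := by
      rw [hk]; field_simp; ring
    linarith

/-- Decay bound for the inverse of the bidiagonal operator `D(a)S⁻¹ + D(b)`:
under the geometric ratio bound and uniform bounds on `a+b` and `b`, the series `T`
is a two-sided inverse and its entries decay exponentially off the diagonal. -/
theorem bidiagonal_inverse_decay
    (a b : ℤ → ℝ) (hb : ∀ j, 0 < b j)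
    (R ρ δ₁ δ₂ : ℝ) (hR : 0 < R) (hρ0 : 0 < ρ) (hρ1 : ρ < 1)
    (hδ1 : 0 < δ₁) (hδ2 : 0 < δ₂)
    (hdecay : ∀ j : ℤ, ∀ k : ℕ, 1 ≤ k →
      ∏ ℓ ∈ Finset.range k, a (j + ℓ) / b (j + ℓ) ≤ R * ρ ^ k)
    (hsum : ∀ j : ℤ, δ₁ ≤ a j + b j ∧ a j + b j ≤ δ₂)
    (hbbd : ∀ j : ℤ, δ₁ ≤ b j) :
    mul (M a b) (T a b) = Id ∧ mul (T a b) (M a b) = Id ∧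
      ∃ R' : ℝ, 0 < R' ∧ ∀ i j : ℤ, |T a b i j| ≤ R' * ρ ^ (i - j).natAbs := by
  have hbne : ∀ j, b j ≠ 0 := fun j => (hb j).ne'
  refine ⟨?_, ?_, ?_⟩
  · -- M * T = Id
    funext i k
    show ∑' j, M a b i j * T a b j k = Id i k
    rw [tsum_eq_sum (s := ({i, i+1} : Finset ℤ)) ?side]
    case side =>
      intro j hj
      simp only [Finset.mem_insert, Finset.mem_singleton, not_or] at hj
      have : M a b i j = 0 := by
        simp only [M, if_neg hj.2, if_neg hj.1]; ring
      rw [this, zero_mul]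
    rw [Finset.sum_pair (by omega : i ≠ i + 1)]
    have hMi : M a b i i = b i := by
      simp only [M, if_neg (by omega : ¬ i = i + 1)]; simp
    have hMi1 : M a b i (i+1) = a i := by
      simp only [M, if_neg (by omega : ¬ i + 1 = i)]; simp
    rw [hMi, hMi1, Tval, Tval]
    rcases lt_trichotomy i k with h | h | h
    · rw [if_pos (by omega : i ≤ k), if_pos (by omega : i + 1 ≤ k)]
      have hId : Id i k = 0 := by simp [Id]; omega
      rw [hId]
      set n := (k - (i+1)).toNat with hn
      have hkn : (k - i).toNat = n + 1 := by omega
      rw [hkn, prod_shift a b i n, pow_succ]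
      have h1 : b i * (b i)⁻¹ = 1 := mul_inv_cancel₀ (hbne i)
      linear_combination (-((-1:ℝ)^n * (∏ ℓ ∈ Finset.range n,
        a ((i+1) + ℓ) / b ((i+1) + ℓ)) * (b k)⁻¹ * a i)) * h1
    · subst h
      rw [if_pos le_rfl, if_neg (by omega : ¬ i + 1 ≤ i)]
      have h0 : (i - i).toNat = 0 := by omega
      rw [h0]
      simp [Id, hbne i]
    · rw [if_neg (by omega : ¬ i ≤ k), if_neg (by omega : ¬ i + 1 ≤ k)]
      have hId : Id i k = 0 := by simp [Id]; omega
      rw [hId]; ring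
  · -- T * M = Id
    funext i k
    show ∑' j, T a b i j * M a b j k = Id i k
    rw [tsum_eq_sum (s := ({k-1, k} : Finset ℤ)) ?side]
    case side =>
      intro j hj
      simp only [Finset.mem_insert, Finset.mem_singleton, not_or] at hj
      have : M a b j k = 0 := by
        simp only [M, if_neg (by omega : ¬ k = j + 1), if_neg (by omega : ¬ k = j)]; ring
      rw [this, mul_zero]
    rw [Finset.sum_pair (by omega : k - 1 ≠ k)]
    have hMk1 : M a b (k-1) k = a (k-1) := by
      simp only [M, if_pos (by omega : k = k - 1 + 1), if_neg (by omega : ¬ k = k - 1)]; simp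
    have hMk : M a b k k = b k := by
      simp only [M, if_neg (by omega : ¬ k = k + 1)]; simp
    rw [hMk1, hMk, Tval, Tval]
    rcases lt_trichotomy i k with h | h | h
    · rw [if_pos (by omega : i ≤ k - 1), if_pos (by omega : i ≤ k)]
      have hId : Id i k = 0 := by simp [Id]; omega
      rw [hId]
      set n := (k - 1 - i).toNat with hn
      have hkn : (k - i).toNat = n + 1 := by omega
      rw [hkn, Finset.prod_range_succ, pow_succ]
      have harg : i + (n : ℤ) = k - 1 := by omega
      rw [harg]
      have h1 : (b k)⁻¹ * b k = 1 := inv_mul_cancel₀ (hbne k)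
      linear_combination (-((-1:ℝ)^n * (∏ ℓ ∈ Finset.range n,
        a (i + ℓ) / b (i + ℓ)) * (a (k-1) / b (k-1)))) * h1
    · subst h
      rw [if_neg (by omega : ¬ i ≤ i - 1), if_pos le_rfl]
      have h0 : (i - i).toNat = 0 := by omega
      rw [h0]
      simp [Id, hbne i]
    · rw [if_neg (by omega : ¬ i ≤ k - 1), if_neg (by omega : ¬ i ≤ k)]
      have hId : Id i k = 0 := by simp [Id]; omega
      rw [hId]; ring
  · -- decay bound
    refine ⟨(max 1 R)^2 / ρ / δ₁, by positivity, fun i j => ?_⟩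
    have habs := abs_prod_le a b hb R ρ δ₁ hρ0 hρ1 hδ1 hdecay (fun j => (hsum j).1)
    rw [Tval]
    by_cases h : i ≤ j
    · rw [if_pos h]
      have hk : (j - i).toNat = (i - j).natAbs := by omega
      rw [abs_mul, abs_mul, abs_pow, abs_neg, abs_one, one_pow, one_mul]
      have h2 : |(b j)⁻¹| ≤ δ₁⁻¹ := by
        rw [abs_inv, abs_of_pos (hb j)]
        exact inv_anti₀ hδ1 (hbbd j)
      calc |∏ ℓ ∈ Finset.range (j-i).toNat, a (i+ℓ)/b (i+ℓ)| * |(b j)⁻¹|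
          ≤ ((max 1 R)^2/ρ * ρ ^ (j-i).toNat) * δ₁⁻¹ :=
            mul_le_mul (habs i _) h2 (abs_nonneg _) (by positivity)
        _ = (max 1 R)^2/ρ/δ₁ * ρ ^ (j-i).toNat := by ring
        _ = (max 1 R)^2/ρ/δ₁ * ρ ^ (i-j).natAbs := by rw [hk]
    · rw [if_neg h, abs_zero]
      positivity

end Stmt14
end

section
/- The Neumann-series inversion identity: for sequences a, b with b_j ≠ 0 and sup_j Π_{ℓ=0}^{k-1}|a_{j+ℓ}/b_{j+ℓ}| ≤ R ρ^k (R>0, 0<ρ<1), one has entrywise (D(a)S⁻¹ + D(b))·(Σ_{k=0}^∞ (−1)^k (D(a/b)S⁻¹)^k)·D(b)⁻¹ = I, and moreover (D(a/b)S⁻¹)^k = D(Π_{ℓ=0}^{k-1} σ^{−ℓ}(a/b))·S^{−k}. -/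
namespace Stmt15

/-- Entrywise product of doubly infinite matrices. -/
noncomputable def mul (A B : ℤ → ℤ → ℝ) : ℤ → ℤ → ℝ := fun i k => ∑' j, A i j * B j k

/-- Entrywise powers of a doubly infinite matrix. -/
noncomputable def pow (A : ℤ → ℤ → ℝ) : ℕ → ℤ → ℤ → ℝ
  | 0 => fun i j => if i = j then 1 else 0
  | k + 1 => mul A (pow A k)

/-- The doubly infinite identity matrix. -/
def Id : ℤ → ℤ → ℝ := fun i j => if i = j then 1 else 0

/-- The backward shift `S⁻¹`, with entry `1` iff `j = i + 1`. -/
def Sinv : ℤ → ℤ → ℝ := fun i j => if j = i + 1 then 1 else 0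

/-- Diagonal matrix with entries given by the sequence `c`. -/
def D (c : ℤ → ℝ) : ℤ → ℤ → ℝ := fun i j => if i = j then c i else 0

/-- `M = D(a)S⁻¹ + D(b)`. -/
def M (a b : ℤ → ℝ) : ℤ → ℤ → ℝ :=
  fun i j => a i * Sinv i j + b i * (if i = j then 1 else 0)

/-- The Neumann series `∑_{k≥0} (−1)^k (D(a/b)S⁻¹)^k`, entrywise. -/
noncomputable def Ser (a b : ℤ → ℝ) : ℤ → ℤ → ℝ :=
  fun i j => ∑' k : ℕ, (-1 : ℝ) ^ k * pow (mul (D (fun m => a m / b m)) Sinv) k i j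

lemma A_eq (c : ℤ → ℝ) (i j : ℤ) :
    mul (D c) Sinv i j = if j = i + 1 then c i else 0 := by
  unfold mul
  rw [tsum_eq_single i]
  · by_cases h : j = i + 1 <;> simp [D, Sinv, h]
  · intro m hm; simp [D, Ne.symm hm]

lemma hprod (c : ℤ → ℝ) (i : ℤ) (k : ℕ) :
    (∏ ℓ ∈ Finset.range (k+1), c (i + ℓ)) =
      c i * ∏ ℓ ∈ Finset.range k, c ((i+1) + ℓ) := by
  rw [Finset.prod_range_succ', mul_comm]
  congr 1
  · norm_num
  · apply Finset.prod_congr rfl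
    intro x _
    congr 1
    push_cast; ring

lemma pow_eq (c : ℤ → ℝ) (k : ℕ) (i j : ℤ) :
    pow (mul (D c) Sinv) k i j =
      (∏ ℓ ∈ Finset.range k, c (i + ℓ)) * (if j = i + k then 1 else 0) := by
  induction k generalizing i j with
  | zero => simp [pow, eq_comm]
  | succ k ih =>
    rw [show pow (mul (D c) Sinv) (k+1) i j
        = ∑' m, mul (D c) Sinv i m * pow (mul (D c) Sinv) k m j from rfl]
    rw [tsum_eq_single (i+1)]
    · rw [A_eq, ih, if_pos rfl, hprod]
      have hidx : ((i+1) + (k:ℤ) = i + ((k+1 : ℕ) : ℤ)) := by push_cast; ring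
      rw [hidx]
      ring
    · intro m hm; rw [A_eq, if_neg hm, zero_mul]

lemma ser_eq (a b : ℤ → ℝ) (i j : ℤ) :
    Ser a b i j = if i ≤ j then
      (-1 : ℝ) ^ (j - i).toNat *
        ∏ ℓ ∈ Finset.range (j - i).toNat, a (i + ℓ) / b (i + ℓ)
      else 0 := by
  unfold Ser
  by_cases h : i ≤ j
  · rw [tsum_eq_single (j - i).toNat, if_pos h]
    · rw [pow_eq]
      have hj : j = i + (((j - i).toNat : ℕ) : ℤ) := by omega
      rw [if_pos hj, mul_one]
    · intro k hk
      rw [pow_eq, if_neg (by omega : ¬ j = i + (k : ℤ)), mul_zero, mul_zero]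
  · rw [if_neg h]
    have hz : ∀ k : ℕ,
        (-1 : ℝ) ^ k * pow (mul (D (fun m => a m / b m)) Sinv) k i j = 0 := by
      intro k
      rw [pow_eq, if_neg (by omega : ¬ j = i + (k : ℤ)), mul_zero, mul_zero]
    exact (tsum_congr hz).trans tsum_zero

/-- Neumann-series inversion:
`(D(a)S⁻¹ + D(b))·(∑_{k≥0}(−1)^k (D(a/b)S⁻¹)^k)·D(b)⁻¹ = I`, and the power formula
`(D(a/b)S⁻¹)^k = D(∏_{ℓ<k} σ^{−ℓ}(a/b))·S^{−k}`. -/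
theorem neumann_series_inversion
    (a b : ℤ → ℝ) (hb : ∀ j, b j ≠ 0)
    (R ρ : ℝ) (hR : 0 < R) (hρ0 : 0 < ρ) (hρ1 : ρ < 1)
    (hdecay : ∀ j : ℤ, ∀ k : ℕ,
      ∏ ℓ ∈ Finset.range k, |a (j + ℓ) / b (j + ℓ)| ≤ R * ρ ^ k) :
    mul (mul (M a b) (Ser a b)) (D (fun j => (b j)⁻¹)) = Id ∧
      ∀ k : ℕ, pow (mul (D (fun m => a m / b m)) Sinv) k =
        fun i j => (∏ ℓ ∈ Finset.range k, a (i + ℓ) / b (i + ℓ)) *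
          (if j = i + k then 1 else 0) := by
  constructor
  · funext i j
    -- key: the inner matrix product
    have hinner : ∀ j' : ℤ, mul (M a b) (Ser a b) i j' =
        a i * Ser a b (i+1) j' + b i * Ser a b i j' := by
      intro j'
      rw [show mul (M a b) (Ser a b) i j'
          = ∑' m, M a b i m * Ser a b m j' from rfl]
      rw [tsum_eq_sum (s := ({i, i+1} : Finset ℤ))
        (by intro m hm
            simp only [Finset.mem_insert, Finset.mem_singleton, not_or] at hm
            simp [M, Sinv, Ne.symm hm.1, hm.2])]
      rw [Finset.sum_pair (by omega : i ≠ i + 1)]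
      simp [M, Sinv, (by omega : ¬ (i : ℤ) = i + 1), (by omega : ¬ (i+1 : ℤ) = i)]
      ring
    -- the entry value
    have hkey : a i * Ser a b (i+1) j + b i * Ser a b i j =
        if i = j then b j else 0 := by
      rcases lt_trichotomy i j with hij | hij | hij
      · rw [if_neg (by omega)]
        rw [ser_eq, ser_eq, if_pos (by omega : (i:ℤ) + 1 ≤ j), if_pos (le_of_lt hij)]
        set m : ℕ := (j - (i+1)).toNat with hm
        have h1 : (j - i).toNat = m + 1 := by omega
        rw [h1, show (∏ ℓ ∈ Finset.range (m+1), a (i + ℓ) / b (i + ℓ))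
            = a i / b i * ∏ ℓ ∈ Finset.range m, a ((i+1) + ℓ) / b ((i+1) + ℓ)
          from hprod (fun m => a m / b m) i m]
        have hbi := hb i
        set P := ∏ ℓ ∈ Finset.range m, a ((i+1) + ℓ) / b ((i+1) + ℓ) with hP
        have hcancel : b i * ((-1:ℝ)^(m+1) * (a i / b i * P)) = (-1)^(m+1) * (a i * P) := by
          field_simp
        rw [hcancel, pow_succ]
        ring
      · subst hij
        rw [ser_eq, ser_eq, if_neg (by omega : ¬ (i:ℤ) + 1 ≤ i), if_pos le_rfl]
        simp
      · rw [ser_eq, ser_eq, if_neg (by omega : ¬ (i:ℤ) + 1 ≤ j),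
          if_neg (by omega : ¬ i ≤ j), if_neg (by omega : ¬ i = j)]
        ring
    rw [show mul (mul (M a b) (Ser a b)) (D (fun j => (b j)⁻¹)) i j
        = ∑' m, mul (M a b) (Ser a b) i m * D (fun j => (b j)⁻¹) m j from rfl]
    rw [tsum_eq_single j (by intro m hm; simp [D, hm])]
    rw [hinner, hkey]
    by_cases h : i = j <;> simp [Id, D, h, hb j]
  · intro k
    funext i j
    exact pow_eq (fun m => a m / b m) k i j

end Stmt15
end
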